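/- Let f : ℤ → ℂ and let m ≥ 1. Assume the Toeplitz matrices T_m(f) and T_{m+1}(f) are invertible. Then (V⁺_{m+1})² − V⁻_{m+1} · Ṽ⁻_{m+1} = V⁺_m · V⁺_{m+1}, where V⁺_j := (T_j(f)^{−1})_{1,1}, V⁻_j := (T_j(f)^{−1})_{j,1}, and Ṽ⁻_j := (T_j(f)^{−1})_{1,j}. -/

import Mathlib

open scoped BigOperators
open Matrix

/-- The `m × m` Toeplitz matrix `T_m(f)` with `(i,j)` entry `f(i-j)`. -/
noncomputable def Tmat (f : ℤ → ℂ) (m : ℕ) : Matrix (Fin m) (Fin m) ℂ :=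
  Matrix.of fun i j : Fin m => f (((i : ℕ) : ℤ) - ((j : ℕ) : ℤ))

/-! Write `A = T_{m+1}⁻¹` and `α = A_{m+1,m+1}`. Bordering `T_m` inside `T_{m+1}` and reading off
`T_{m+1} A = 1` blockwise gives Jacobi's identity `α A_{ij} - A_{i,m+1} A_{m+1,j} = α (T_m⁻¹)_{ij}`
for `i, j ≤ m`. A Toeplitz matrix is persymmetric (symmetric about its antidiagonal), hence so is its
inverse, and therefore `α = A_{11}`; the case `i = j = 1` is the identity. -/

namespace Matrix

variable {R : Type*} [CommRing R]

theorem submatrix_castSucc_mul_of_mul_eq_one {m : ℕ} {M A : Matrix (Fin (m + 1)) (Fin (m + 1)) R}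
    (h : M * A = 1) :
    M.submatrix Fin.castSucc Fin.castSucc *
        of (fun i j : Fin m => A (Fin.last m) (Fin.last m) * A i.castSucc j.castSucc -
          A i.castSucc (Fin.last m) * A (Fin.last m) j.castSucc) =
      A (Fin.last m) (Fin.last m) • 1 := by
  have row : ∀ (i : Fin m) (j : Fin (m + 1)),
      ∑ k : Fin m, M i.castSucc k.castSucc * A k.castSucc j =
        (1 : Matrix _ _ R) i.castSucc j - M i.castSucc (Fin.last m) * A (Fin.last m) j := by
    intro i j
    rw [← h, mul_apply, Fin.sum_univ_castSucc, add_sub_cancel_right]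
  ext i j
  have hj := row i j.castSucc
  have hlast := row i (Fin.last m)
  simp only [one_apply, Fin.castSucc_inj, (Fin.castSucc_lt_last i).ne, if_false] at hj hlast
  simp only [mul_apply, submatrix_apply, of_apply, smul_apply, one_apply, smul_eq_mul, mul_sub,
    Finset.sum_sub_distrib, mul_left_comm _ (A (Fin.last m) (Fin.last m)),
    ← mul_assoc _ _ (A (Fin.last m) j.castSucc), ← Finset.mul_sum, ← Finset.sum_mul, hj, hlast]
  split_ifs <;> ring

theorem jacobi_inv_submatrix_castSucc {m : ℕ} (M : Matrix (Fin (m + 1)) (Fin (m + 1)) R)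
    (hP : IsUnit (M.submatrix Fin.castSucc Fin.castSucc)) (i j : Fin m) :
    M⁻¹ (Fin.last m) (Fin.last m) * M⁻¹ i.castSucc j.castSucc -
        M⁻¹ i.castSucc (Fin.last m) * M⁻¹ (Fin.last m) j.castSucc =
      M⁻¹ (Fin.last m) (Fin.last m) * (M.submatrix Fin.castSucc Fin.castSucc)⁻¹ i j := by
  by_cases hM : IsUnit M.det
  · have hPdet := (isUnit_iff_isUnit_det _).mp hP
    have key := congrArg ((M.submatrix Fin.castSucc Fin.castSucc)⁻¹ * ·)
      (submatrix_castSucc_mul_of_mul_eq_one (mul_nonsing_inv M hM))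
    simp only [nonsing_inv_mul_cancel_left _ _ hPdet] at key
    simpa using congrFun (congrFun key i) j
  · -- for singular `M` both sides vanish, since then `M⁻¹ = 0`
    simp [nonsing_inv_apply_not_isUnit M hM]

theorem inv_submatrix_rev_eq_transpose {n : ℕ} {M : Matrix (Fin n) (Fin n) R}
    (hM : M.submatrix Fin.rev Fin.rev = Mᵀ) :
    M⁻¹.submatrix Fin.rev Fin.rev = M⁻¹ᵀ := by
  calc M⁻¹.submatrix Fin.rev Fin.rev = (M.submatrix Fin.rev Fin.rev)⁻¹ :=
        (inv_submatrix_equiv M Fin.revPerm Fin.revPerm).symm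
    _ = M⁻¹ᵀ := by rw [hM, transpose_nonsing_inv]

end Matrix

theorem Tmat_submatrix_rev (f : ℤ → ℂ) (n : ℕ) :
    (Tmat f n).submatrix Fin.rev Fin.rev = (Tmat f n)ᵀ := by
  ext i j
  simp only [Tmat, submatrix_apply, transpose_apply, of_apply, Fin.val_rev]
  congr 1
  omega

theorem Tmat_submatrix_castSucc (f : ℤ → ℂ) (m : ℕ) :
    (Tmat f (m + 1)).submatrix Fin.castSucc Fin.castSucc = Tmat f m :=
  rfl

theorem Tmat_inv_zero_zero (f : ℤ → ℂ) (m : ℕ) :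
    (Tmat f (m + 1))⁻¹ 0 0 = (Tmat f (m + 1))⁻¹ (Fin.last m) (Fin.last m) := by
  simpa using congrFun (congrFun (inv_submatrix_rev_eq_transpose (Tmat_submatrix_rev f (m + 1)))
    (Fin.last m)) (Fin.last m)

theorem toeplitz_V_identity (f : ℤ → ℂ) (m : ℕ) (hm : 1 ≤ m)
    (h1 : IsUnit (Tmat f m)) :
    ((Tmat f (m + 1))⁻¹ ⟨0, by omega⟩ ⟨0, by omega⟩) ^ 2 -
        (Tmat f (m + 1))⁻¹ ⟨m, by omega⟩ ⟨0, by omega⟩ *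
          (Tmat f (m + 1))⁻¹ ⟨0, by omega⟩ ⟨m, by omega⟩ =
      (Tmat f m)⁻¹ ⟨0, by omega⟩ ⟨0, by omega⟩ *
        (Tmat f (m + 1))⁻¹ ⟨0, by omega⟩ ⟨0, by omega⟩ := by
  have jacobi := jacobi_inv_submatrix_castSucc (Tmat f (m + 1))
    (by rwa [Tmat_submatrix_castSucc]) ⟨0, hm⟩ ⟨0, hm⟩
  rw [Tmat_submatrix_castSucc, ← Tmat_inv_zero_zero] at jacobi
  rw [sq, mul_comm ((Tmat f (m + 1))⁻¹ ⟨m, _⟩ _), mul_comm ((Tmat f m)⁻¹ _ _)]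
  exact jacobi
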